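/- arXiv:2412.16347 — 2 statements merged into one kernel-verified Lean document; each statement's English description precedes it below -/
import Mathlib

section
/- Consider an LTV system on an open interval I ⊆ ℝ with coefficients A, B, C, D, and assume that for every t0 ∈ I, x0 ∈ ℂ^n, and u ∈ L²_loc(I, ℂ^m) there exists exactly one locally absolutely continuous x : I → ℂ^n with x(t0) = x0 and ẋ(t) = A(t)x(t) + B(t)u(t) for a.e. t ∈ I. If the available storage V_a(t0,x0) := sup { −∫_{t0}^{t1} Re(y(t)* u(t)) dt : t1 ∈ I, t1 ≥ t0, (x,u,y) a state-input-output solution with x(t0) = x0 } is finite for every t0 ∈ I and x0 ∈ ℂ^n, then V_a : I × ℂ^n → ℝ is itself a storage function for the system; in particular the system is passive. -/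
open MeasureTheory Matrix Set Filter Topology
open scoped ComplexOrder ENNReal

namespace Paper

/-- Loewner order `M ≤ N`, i.e. `N - M` is positive semidefinite. -/
def LoewnerLE {n : ℕ} (M N : Matrix (Fin n) (Fin n) ℂ) : Prop := (N - M).PosSemidef

/-- Entrywise (Bochner) interval integral of a matrix-valued function. -/
noncomputable def matInt {k l : ℕ} (G : ℝ → Matrix (Fin k) (Fin l) ℂ) (r s : ℝ) :
    Matrix (Fin k) (Fin l) ℂ :=
  Matrix.of fun i j => ∫ t in r..s, G t i j

/-- `Q` is absolutely upper semicontinuous on `[a,b]`: there is a Bochner-integrable,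
pointwise Hermitian `G` with `Q s - Q r ≤ ∫_r^s G` in the Loewner order. -/
def IsAUCOn {n : ℕ} (Q : ℝ → Matrix (Fin n) (Fin n) ℂ) (a b : ℝ) : Prop :=
  ∃ G : ℝ → Matrix (Fin n) (Fin n) ℂ,
    (∀ t, (G t).IsHermitian) ∧
    (∀ i j, IntegrableOn (fun t => G t i j) (Icc a b)) ∧
    ∀ r s : ℝ, a ≤ r → r ≤ s → s ≤ b → LoewnerLE (Q s - Q r) (matInt G r s)

/-- A matrix-valued function is locally `L^p` on `I` (entrywise, on compact subintervals). -/
def MemLocLp {k l : ℕ} (p : ℝ≥0∞) (I : Set ℝ) (F : ℝ → Matrix (Fin k) (Fin l) ℂ) : Prop :=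
  ∀ a b : ℝ, a ∈ I → b ∈ I → ∀ i j, MemLp (fun t => F t i j) p (volume.restrict (Icc a b))

/-- A vector-valued function is locally `L^p` on `I`. -/
def VecMemLocLp {k : ℕ} (p : ℝ≥0∞) (I : Set ℝ) (f : ℝ → Fin k → ℂ) : Prop :=
  ∀ a b : ℝ, a ∈ I → b ∈ I → ∀ i, MemLp (fun t => f t i) p (volume.restrict (Icc a b))

/-- `x` is locally absolutely continuous on `I` with (a.e.) derivative `x'`. -/
def VecLocAC {k : ℕ} (I : Set ℝ) (x x' : ℝ → Fin k → ℂ) : Prop :=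
  (∀ a b : ℝ, a ∈ I → b ∈ I → ∀ i, IntegrableOn (fun t => x' t i) (Icc a b)) ∧
  ∀ s t : ℝ, s ∈ I → t ∈ I → ∀ i, x t i = x s i + ∫ τ in s..t, x' τ i

/-- A matrix function is locally absolutely continuous on `I` with (a.e.) derivative `X'`. -/
def MatLocAC {k l : ℕ} (I : Set ℝ) (X X' : ℝ → Matrix (Fin k) (Fin l) ℂ) : Prop :=
  (∀ a b : ℝ, a ∈ I → b ∈ I → ∀ i j, IntegrableOn (fun t => X' t i j) (Icc a b)) ∧
  ∀ s t : ℝ, s ∈ I → t ∈ I → ∀ i j, X t i j = X s i j + ∫ τ in s..t, X' τ i j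

/-- The coefficients of an LTV system lie in the appropriate local Lebesgue spaces. -/
def IsLTV {n m : ℕ} (I : Set ℝ)
    (A : ℝ → Matrix (Fin n) (Fin n) ℂ) (B : ℝ → Matrix (Fin n) (Fin m) ℂ)
    (C : ℝ → Matrix (Fin m) (Fin n) ℂ) (D : ℝ → Matrix (Fin m) (Fin m) ℂ) : Prop :=
  MemLocLp 1 I A ∧ MemLocLp 2 I B ∧ MemLocLp 2 I C ∧ MemLocLp ⊤ I D

/-- `(x, u, y)` is a state-input-output solution of the LTV system on `I`. -/
def IsSIOSol {n m : ℕ} (I : Set ℝ)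
    (A : ℝ → Matrix (Fin n) (Fin n) ℂ) (B : ℝ → Matrix (Fin n) (Fin m) ℂ)
    (C : ℝ → Matrix (Fin m) (Fin n) ℂ) (D : ℝ → Matrix (Fin m) (Fin m) ℂ)
    (x : ℝ → Fin n → ℂ) (u y : ℝ → Fin m → ℂ) : Prop :=
  VecMemLocLp 2 I u ∧ VecMemLocLp 2 I y ∧
  (∃ x', VecLocAC I x x' ∧ ∀ᵐ t ∂volume, t ∈ I → x' t = A t *ᵥ x t + B t *ᵥ u t) ∧
  ∀ᵐ t ∂volume, t ∈ I → y t = C t *ᵥ x t + D t *ᵥ u t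

/-- The supplied energy `∫_{t0}^{t1} Re (y(t)^* u(t)) dt`. -/
noncomputable def supply {k : ℕ} (u y : ℝ → Fin k → ℂ) (t0 t1 : ℝ) : ℝ :=
  ∫ t in t0..t1, (star (y t) ⬝ᵥ u t).re

/-- `V` is a storage function for the LTV system on `I`. -/
def IsStorage {n m : ℕ} (I : Set ℝ)
    (A : ℝ → Matrix (Fin n) (Fin n) ℂ) (B : ℝ → Matrix (Fin n) (Fin m) ℂ)
    (C : ℝ → Matrix (Fin m) (Fin n) ℂ) (D : ℝ → Matrix (Fin m) (Fin m) ℂ)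
    (V : ℝ → (Fin n → ℂ) → ℝ) : Prop :=
  (∀ t ∈ I, ∀ x, 0 ≤ V t x) ∧ (∀ t ∈ I, V t 0 = 0) ∧
  ∀ x u y, IsSIOSol I A B C D x u y → ∀ t0 t1 : ℝ, t0 ∈ I → t1 ∈ I → t0 ≤ t1 →
    V t1 (x t1) - V t0 (x t0) ≤ supply u y t0 t1

/-- The quadratic storage function candidate `V_Q(t, x) = ½ x^* Q(t) x`. -/
noncomputable def quadStorage {k : ℕ} (Q : ℝ → Matrix (Fin k) (Fin k) ℂ) :
    ℝ → (Fin k → ℂ) → ℝ :=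
  fun t x => (1 / 2 : ℝ) * (star x ⬝ᵥ (Q t *ᵥ x)).re

/-- `X` is a fundamental solution matrix for `A` anchored at `t0`. -/
def IsFundamental {n : ℕ} (I : Set ℝ) (A : ℝ → Matrix (Fin n) (Fin n) ℂ) (t0 : ℝ)
    (X : ℝ → Matrix (Fin n) (Fin n) ℂ) : Prop :=
  t0 ∈ I ∧ X t0 = 1 ∧ (∀ t ∈ I, IsUnit (X t)) ∧
  ∃ X', MatLocAC I X X' ∧ ∀ᵐ t ∂volume, t ∈ I → X' t = A t * X t

/-- The supply set whose supremum is the available storage `V_a(t0, x0)`. -/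
def supplySet {n m : ℕ} (I : Set ℝ)
    (A : ℝ → Matrix (Fin n) (Fin n) ℂ) (B : ℝ → Matrix (Fin n) (Fin m) ℂ)
    (C : ℝ → Matrix (Fin m) (Fin n) ℂ) (D : ℝ → Matrix (Fin m) (Fin m) ℂ)
    (t0 : ℝ) (x0 : Fin n → ℂ) : Set ℝ :=
  { c | ∃ t1 x u y, t1 ∈ I ∧ t0 ≤ t1 ∧ IsSIOSol I A B C D x u y ∧ x t0 = x0 ∧
      c = -(supply u y t0 t1) }

/-- Null space decomposition structure: `M i j = 0` whenever `i` or `j` (0-based) is `≥ r`,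
and the top-left `r × r` block of `M` is Hermitian positive definite. -/
def NSDStruct {k : ℕ} (M : Matrix (Fin k) (Fin k) ℂ) (r : ℕ) : Prop :=
  (∀ i j : Fin k, (r ≤ (i : ℕ) ∨ r ≤ (j : ℕ)) → M i j = 0) ∧
  ∀ h : r ≤ k, (M.submatrix (Fin.castLE h) (Fin.castLE h)).PosDef

/-! `V_a(t0, x0)` is the supremum of the energy extractable from the state `x0` at time `t0`.
It is nonnegative since the experiment with `t1 = t0` extracts nothing. At the zero state,
scaling a solution by `k` scales the extracted energy by `k²`, so a positive value would make the
supremum infinite. For the dissipation inequality, precede any experiment from `x t1` by the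
given trajectory on `[t0, t1]`: the concatenation is an experiment from `x t0`, whence
`V_a(t1, x t1) - ∫_{t0}^{t1} Re (y* u) ≤ V_a(t0, x t0)`. -/

theorem piecewise_eval {α ι : Type*} {β : ι → Type*} (s : Set α) [DecidablePred (· ∈ s)]
    (f g : α → ∀ i, β i) (i : ι) :
    (fun t => s.piecewise f g t i) = s.piecewise (fun t => f t i) (fun t => g t i) := by
  funext t
  by_cases ht : t ∈ s <;> simp [ht]

theorem intervalIntegrable_of_integrableOn_Icc {E : Type*} [NormedAddCommGroup E] {I : Set ℝ}
    {f : ℝ → E} (hf : ∀ a b : ℝ, a ∈ I → b ∈ I → IntegrableOn f (Icc a b)) {a b : ℝ}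
    (ha : a ∈ I) (hb : b ∈ I) : IntervalIntegrable f volume a b := by
  refine IntegrableOn.intervalIntegrable ?_
  rcases le_total a b with hab | hba
  · rw [uIcc_of_le hab]; exact hf a b ha hb
  · rw [uIcc_of_ge hba]; exact hf b a hb ha

section Signals

variable {I : Set ℝ} {k : ℕ} {t1 : ℝ}

theorem VecMemLocLp.intervalIntegrable_supply {u y : ℝ → Fin k → ℂ}
    (hu : VecMemLocLp 2 I u) (hy : VecMemLocLp 2 I y) {a b : ℝ} (ha : a ∈ I) (hb : b ∈ I) :
    IntervalIntegrable (fun t => (star (y t) ⬝ᵥ u t).re) volume a b := by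
  refine intervalIntegrable_of_integrableOn_Icc (fun c d hc hd => ?_) ha hb
  have hdot : Integrable (fun t => star (y t) ⬝ᵥ u t) (volume.restrict (Icc c d)) :=
    integrable_finsetSum _ fun i _ =>
      memLp_one_iff_integrable.mp ((hu c d hc hd i).mul ((hy c d hc hd i).star))
  exact hdot.re

theorem supply_add_supply {u y : ℝ → Fin k → ℂ}
    (hu : VecMemLocLp 2 I u) (hy : VecMemLocLp 2 I y) {a b c : ℝ}
    (ha : a ∈ I) (hb : b ∈ I) (hc : c ∈ I) :
    supply u y a b + supply u y b c = supply u y a c :=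
  intervalIntegral.integral_add_adjacent_intervals (hu.intervalIntegrable_supply hy ha hb)
    (hu.intervalIntegrable_supply hy hb hc)

theorem supply_const_smul (u y : ℝ → Fin k → ℂ) (c : ℂ) (a b : ℝ) :
    supply (fun t => c • u t) (fun t => c • y t) a b = ‖c‖ ^ 2 * supply u y a b := by
  rw [supply, supply, ← intervalIntegral.integral_const_mul]
  congr 1 with t
  rw [star_smul, smul_dotProduct, dotProduct_smul, smul_smul, smul_eq_mul, Complex.star_def,
    Complex.conj_mul', ← Complex.ofReal_pow, Complex.re_ofReal_mul]

theorem VecLocAC.continuousOn (hI : I.OrdConnected) {x x' : ℝ → Fin k → ℂ}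
    (hx : VecLocAC I x x') {a b : ℝ} (ha : a ∈ I) (hb : b ∈ I) :
    ContinuousOn x (Icc a b) := by
  refine continuousOn_pi.mpr fun i => ?_
  rcases le_or_gt a b with hab | hba
  · have hprim := (continuousOn_const (c := x a i)).add
      (intervalIntegral.continuousOn_primitive_interval (μ := volume)
        (f := fun t => x' t i) (a := a) (b := b) (by rw [uIcc_of_le hab]; exact hx.1 a b ha hb i))
    rw [uIcc_of_le hab] at hprim
    exact hprim.congr fun t ht => hx.2 a t ha (hI.out ha hb ht) i
  · simp [Icc_eq_empty_of_lt hba]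

theorem VecLocAC.vecMemLocLp_mulVec {l : ℕ} (hI : I.OrdConnected)
    {F : ℝ → Matrix (Fin l) (Fin k) ℂ} (hF : MemLocLp 2 I F) {x x' : ℝ → Fin k → ℂ}
    (hx : VecLocAC I x x') : VecMemLocLp 2 I (fun t => F t *ᵥ x t) := by
  intro a b ha hb i
  have hcont := hx.continuousOn hI ha hb
  obtain ⟨M, hM⟩ := isCompact_Icc.exists_bound_of_continuousOn hcont
  have hx_top : ∀ j, MemLp (fun t => x t j) ⊤ (volume.restrict (Icc a b)) := fun j =>
    memLp_top_of_bound
      (((continuous_apply j).comp_continuousOn hcont).aestronglyMeasurable measurableSet_Icc) M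
      (ae_restrict_of_forall_mem measurableSet_Icc fun t ht =>
        (norm_le_pi_norm (x t) j).trans (hM t ht))
  simp only [mulVec, dotProduct]
  exact memLp_finsetSum _ fun j _ => (hx_top j).mul' (r := 2) (hF a b ha hb i j)

theorem VecMemLocLp.const_smul {p : ℝ≥0∞} {f : ℝ → Fin k → ℂ} (hf : VecMemLocLp p I f)
    (c : ℂ) : VecMemLocLp p I (fun t => c • f t) :=
  fun a b ha hb i => (hf a b ha hb i).const_smul c

theorem VecLocAC.const_smul {x x' : ℝ → Fin k → ℂ} (hx : VecLocAC I x x') (c : ℂ) :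
    VecLocAC I (fun t => c • x t) (fun t => c • x' t) := by
  refine ⟨fun a b ha hb i => (hx.1 a b ha hb i).const_mul c, fun s t hs ht i => ?_⟩
  simp only [Pi.smul_apply, smul_eq_mul, intervalIntegral.integral_const_mul, hx.2 s t hs ht i]
  ring

theorem VecLocAC.of_eq_add_integral {x x' : ℝ → Fin k → ℂ} (ht1 : t1 ∈ I)
    (hint : ∀ a b : ℝ, a ∈ I → b ∈ I → ∀ i, IntegrableOn (fun t => x' t i) (Icc a b))
    (hx : ∀ t ∈ I, ∀ i, x t i = x t1 i + ∫ τ in t1..t, x' τ i) : VecLocAC I x x' := by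
  refine ⟨hint, fun s t hs ht i => ?_⟩
  rw [hx t ht i, hx s hs i, add_assoc, intervalIntegral.integral_add_adjacent_intervals
    (intervalIntegrable_of_integrableOn_Icc (fun a b ha hb => hint a b ha hb i) ht1 hs)
    (intervalIntegrable_of_integrableOn_Icc (fun a b ha hb => hint a b ha hb i) hs ht)]

theorem VecMemLocLp.piecewise_Iio {p : ℝ≥0∞} {f g : ℝ → Fin k → ℂ} (hf : VecMemLocLp p I f)
    (hg : VecMemLocLp p I g) : VecMemLocLp p I ((Iio t1).piecewise f g) := by
  intro a b ha hb i
  rw [piecewise_eval]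
  exact (hf a b ha hb i).restrict _ |>.piecewise measurableSet_Iio ((hg a b ha hb i).restrict _)

theorem VecLocAC.piecewise_Iio {x x' z z' : ℝ → Fin k → ℂ} (hx : VecLocAC I x x')
    (hz : VecLocAC I z z') (ht1 : t1 ∈ I) (hglue : z t1 = x t1) :
    VecLocAC I ((Iio t1).piecewise x z) ((Iio t1).piecewise x' z') := by
  refine .of_eq_add_integral ht1 (fun a b ha hb i => ?_) fun t ht i => ?_
  · rw [piecewise_eval]
    exact Integrable.piecewise measurableSet_Iio (hx.1 a b ha hb i).integrableOn
      (hz.1 a b ha hb i).integrableOn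
  rw [piecewise_eq_of_notMem (Iio t1) x z (lt_irrefl t1)]
  rcases lt_or_ge t t1 with hlt | hge
  · have hint : EqOn (fun τ => (Iio t1).piecewise x' z' τ i) (fun τ => x' τ i) (uIoo t1 t) := by
      intro τ hτ
      rw [uIoo_of_ge hlt.le] at hτ
      simp [piecewise_eq_of_mem (Iio t1) x' z' hτ.2]
    rw [piecewise_eq_of_mem (Iio t1) x z hlt, intervalIntegral.integral_congr_uIoo hint, hglue]
    exact hx.2 t1 t ht1 ht i
  · have hint : EqOn (fun τ => (Iio t1).piecewise x' z' τ i) (fun τ => z' τ i) (uIoo t1 t) := by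
      intro τ hτ
      rw [uIoo_of_le hge] at hτ
      simp [piecewise_eq_of_notMem (Iio t1) x' z' (not_lt.mpr hτ.1.le)]
    rw [piecewise_eq_of_notMem (Iio t1) x z (not_lt.mpr hge),
      intervalIntegral.integral_congr_uIoo hint]
    exact hz.2 t1 t ht1 ht i

theorem supply_piecewise_Iio_of_le (u y v w : ℝ → Fin k → ℂ) {t0 : ℝ} (h : t0 ≤ t1) :
    supply ((Iio t1).piecewise u v) ((Iio t1).piecewise y w) t0 t1 = supply u y t0 t1 := by
  refine intervalIntegral.integral_congr_uIoo fun τ hτ => ?_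
  rw [uIoo_of_le h] at hτ
  simp [piecewise_eq_of_mem (Iio t1) _ _ hτ.2]

theorem supply_piecewise_Iio_of_ge (u y v w : ℝ → Fin k → ℂ) {t2 : ℝ} (h : t1 ≤ t2) :
    supply ((Iio t1).piecewise u v) ((Iio t1).piecewise y w) t1 t2 = supply v w t1 t2 := by
  refine intervalIntegral.integral_congr_uIoo fun τ hτ => ?_
  rw [uIoo_of_le h] at hτ
  simp [piecewise_eq_of_notMem (Iio t1) _ _ (not_lt.mpr hτ.1.le)]

end Signals

section Solutions

variable {n m : ℕ} {I : Set ℝ}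
  {A : ℝ → Matrix (Fin n) (Fin n) ℂ} {B : ℝ → Matrix (Fin n) (Fin m) ℂ}
  {C : ℝ → Matrix (Fin m) (Fin n) ℂ} {D : ℝ → Matrix (Fin m) (Fin m) ℂ} {t1 : ℝ}

theorem isSIOSol_zero_input (hI : I.OrdConnected) (hC : MemLocLp 2 I C)
    {x x' : ℝ → Fin n → ℂ} (hx : VecLocAC I x x')
    (hode : ∀ᵐ t ∂volume, t ∈ I → x' t = A t *ᵥ x t + B t *ᵥ 0) :
    IsSIOSol I A B C D x 0 (fun t => C t *ᵥ x t) :=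
  ⟨fun _ _ _ _ _ => MemLp.zero, hx.vecMemLocLp_mulVec hI hC, ⟨x', hx, hode⟩,
    ae_of_all _ fun t _ => by simp⟩

theorem IsSIOSol.const_smul {x : ℝ → Fin n → ℂ} {u y : ℝ → Fin m → ℂ}
    (h : IsSIOSol I A B C D x u y) (c : ℂ) :
    IsSIOSol I A B C D (fun t => c • x t) (fun t => c • u t) (fun t => c • y t) := by
  obtain ⟨hu, hy, ⟨x', hx, hode⟩, hout⟩ := h
  refine ⟨hu.const_smul c, hy.const_smul c, ⟨_, hx.const_smul c, ?_⟩, ?_⟩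
  · filter_upwards [hode] with t ht htI
    rw [mulVec_smul, mulVec_smul, ← smul_add, ht htI]
  · filter_upwards [hout] with t ht htI
    rw [mulVec_smul, mulVec_smul, ← smul_add, ht htI]

theorem IsSIOSol.piecewise_Iio {x z : ℝ → Fin n → ℂ} {u y v w : ℝ → Fin m → ℂ}
    (h : IsSIOSol I A B C D x u y) (h' : IsSIOSol I A B C D z v w) (ht1 : t1 ∈ I)
    (hglue : z t1 = x t1) :
    IsSIOSol I A B C D ((Iio t1).piecewise x z) ((Iio t1).piecewise u v)
      ((Iio t1).piecewise y w) := by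
  obtain ⟨hu, hy, ⟨x', hx, hode⟩, hout⟩ := h
  obtain ⟨hv, hw, ⟨z', hz, hode'⟩, hout'⟩ := h'
  refine ⟨hu.piecewise_Iio hv, hy.piecewise_Iio hw, ⟨_, hx.piecewise_Iio hz ht1 hglue, ?_⟩, ?_⟩
  · filter_upwards [hode, hode'] with t h h' htI
    by_cases hlt : t ∈ Iio t1 <;> simp [hlt, h htI, h' htI]
  · filter_upwards [hout, hout'] with t h h' htI
    by_cases hlt : t ∈ Iio t1 <;> simp [hlt, h htI, h' htI]

theorem zero_mem_supplySet {x : ℝ → Fin n → ℂ} {u y : ℝ → Fin m → ℂ}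
    (h : IsSIOSol I A B C D x u y) {t0 : ℝ} (ht0 : t0 ∈ I) :
    (0 : ℝ) ∈ supplySet I A B C D t0 (x t0) :=
  ⟨t0, x, u, y, ht0, le_rfl, h, rfl, by simp [supply]⟩

theorem mul_mem_supplySet_zero {t0 c r : ℝ} (hc : c ∈ supplySet I A B C D t0 0) (hr : 0 ≤ r) :
    r * c ∈ supplySet I A B C D t0 0 := by
  obtain ⟨t1, x, u, y, ht1, ht01, h, hx0, rfl⟩ := hc
  refine ⟨t1, _, _, _, ht1, ht01, h.const_smul (Real.sqrt r : ℂ), by simp [hx0], ?_⟩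
  rw [supply_const_smul, Complex.norm_real, Real.norm_eq_abs, sq_abs, Real.sq_sqrt hr, mul_neg]

theorem neg_supply_add_mem_supplySet {x : ℝ → Fin n → ℂ} {u y : ℝ → Fin m → ℂ}
    (h : IsSIOSol I A B C D x u y) {t0 c : ℝ} (ht0 : t0 ∈ I) (ht1 : t1 ∈ I) (h01 : t0 ≤ t1)
    (hc : c ∈ supplySet I A B C D t1 (x t1)) :
    -supply u y t0 t1 + c ∈ supplySet I A B C D t0 (x t0) := by
  obtain ⟨t2, z, v, w, ht2, h12, h', hz, rfl⟩ := hc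
  have hcat := h.piecewise_Iio h' ht1 hz
  refine ⟨t2, _, _, _, ht2, h01.trans h12, hcat, ?_, ?_⟩
  · rcases h01.lt_or_eq with hlt | rfl
    · exact piecewise_eq_of_mem (Iio t1) x z hlt
    · exact (piecewise_eq_of_notMem (Iio t0) x z (lt_irrefl t0)).trans hz
  · rw [← supply_add_supply hcat.1 hcat.2.1 ht0 ht1 ht2, supply_piecewise_Iio_of_le _ _ _ _ h01,
      supply_piecewise_Iio_of_ge _ _ _ _ h12]
    ring

end Solutions

theorem csSup_eq_zero_of_mul_mem {S : Set ℝ} (hS : BddAbove S) (h0 : 0 ∈ S)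
    (hmul : ∀ c ∈ S, ∀ r : ℝ, 0 ≤ r → r * c ∈ S) : sSup S = 0 := by
  refine le_antisymm (csSup_le ⟨0, h0⟩ fun c hc => ?_) (le_csSup hS h0)
  by_contra! hpos
  obtain ⟨M, hM⟩ := hS
  have hM0 : 0 ≤ M := hM h0
  have hscaled := hM (hmul c hc ((M + 1) / c) (div_nonneg (by linarith) hpos.le))
  rw [div_mul_cancel₀ _ hpos.ne'] at hscaled
  linarith

theorem statement11_general {n m : ℕ} (I : Set ℝ) (hIconn : I.OrdConnected)
    (A : ℝ → Matrix (Fin n) (Fin n) ℂ) (B : ℝ → Matrix (Fin n) (Fin m) ℂ)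
    (C : ℝ → Matrix (Fin m) (Fin n) ℂ) (D : ℝ → Matrix (Fin m) (Fin m) ℂ)
    (hLTV : IsLTV I A B C D)
    (hexuniq : ∀ t0 ∈ I, ∀ x0 : Fin n → ℂ, ∀ u : ℝ → Fin m → ℂ, VecMemLocLp 2 I u →
        ∃ x x' : ℝ → Fin n → ℂ, VecLocAC I x x' ∧
          (∀ᵐ t ∂volume, t ∈ I → x' t = A t *ᵥ x t + B t *ᵥ u t) ∧ x t0 = x0 ∧
          ∀ z z' : ℝ → Fin n → ℂ, VecLocAC I z z' →
            (∀ᵐ t ∂volume, t ∈ I → z' t = A t *ᵥ z t + B t *ᵥ u t) → z t0 = x0 →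
            ∀ t ∈ I, z t = x t)
    (hfin : ∀ t0 ∈ I, ∀ x0 : Fin n → ℂ, BddAbove (supplySet I A B C D t0 x0)) :
    IsStorage I A B C D (fun t x => sSup (supplySet I A B C D t x)) := by
  have hzero : ∀ t ∈ I, ∀ x0, (0 : ℝ) ∈ supplySet I A B C D t x0 := by
    intro t ht x0
    obtain ⟨x, x', hx, hode, rfl, -⟩ := hexuniq t ht x0 0 fun _ _ _ _ _ => MemLp.zero
    exact zero_mem_supplySet (isSIOSol_zero_input (D := D) hIconn hLTV.2.2.1 hx hode) ht
  refine ⟨fun t ht x0 => le_csSup (hfin t ht x0) (hzero t ht x0),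
    fun t ht => csSup_eq_zero_of_mul_mem (hfin t ht 0) (hzero t ht 0)
      fun c hc r hr => mul_mem_supplySet_zero hc hr,
    fun x u y h t0 t1 ht0 ht1 h01 => ?_⟩
  rw [sub_le_iff_le_add']
  refine csSup_le ⟨0, hzero t1 ht1 _⟩ fun c hc => ?_
  have hle := le_csSup (hfin t0 ht0 (x t0)) (neg_supply_add_mem_supplySet h ht0 ht1 h01 hc)
  linarith

/-- if the available storage is finite, it is itself a storage function;
in particular the system is passive. -/
theorem statement11 {n m : ℕ} (I : Set ℝ) (hIopen : IsOpen I) (hIconn : I.OrdConnected)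
    (A : ℝ → Matrix (Fin n) (Fin n) ℂ) (B : ℝ → Matrix (Fin n) (Fin m) ℂ)
    (C : ℝ → Matrix (Fin m) (Fin n) ℂ) (D : ℝ → Matrix (Fin m) (Fin m) ℂ)
    (hLTV : IsLTV I A B C D)
    (hexuniq : ∀ t0 ∈ I, ∀ x0 : Fin n → ℂ, ∀ u : ℝ → Fin m → ℂ, VecMemLocLp 2 I u →
        ∃ x x' : ℝ → Fin n → ℂ, VecLocAC I x x' ∧
          (∀ᵐ t ∂volume, t ∈ I → x' t = A t *ᵥ x t + B t *ᵥ u t) ∧ x t0 = x0 ∧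
          ∀ z z' : ℝ → Fin n → ℂ, VecLocAC I z z' →
            (∀ᵐ t ∂volume, t ∈ I → z' t = A t *ᵥ z t + B t *ᵥ u t) → z t0 = x0 →
            ∀ t ∈ I, z t = x t)
    (hfin : ∀ t0 ∈ I, ∀ x0 : Fin n → ℂ, BddAbove (supplySet I A B C D t0 x0)) :
    IsStorage I A B C D (fun t x => sSup (supplySet I A B C D t x)) :=
  statement11_general I hIconn A B C D hLTV hexuniq hfin

end Paper
end

section
/- Let n ∈ ℕ, let I ⊆ ℝ be an open interval, and let Q : I → ℂ^{n×n} be pointwise Hermitian positive semidefinite and weakly decreasing. Let t₋₁ < t0 < t1 in I, and suppose L, R ∈ ℂ^{n×n} are such that Q(t) → L as t → t0 from the left and Q(t) → R as t → t0 from the right. Then ker Q(t₋₁) ⊆ ker L ⊆ ker Q(t0) ⊆ ker R ⊆ ker Q(t1), where ker M := { v ∈ ℂ^n : Mv = 0 }. -/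
open MeasureTheory Matrix Set Filter Topology
open scoped ComplexOrder ENNReal

/-!
`LoewnerLE M N` is definitionally `M ≤ N` for the order of `MatrixOrder`, which is closed in the
entrywise topology. Hence the one-sided limits inherit the monotonicity of `Q`:
`Q t1 ≤ R ≤ Q t0 ≤ L ≤ Q tm`. Kernels are antitone along `0 ≤ M ≤ N`: if `N v = 0` then
`0 ≤ v⋆ M v ≤ v⋆ N v = 0`, and `v⋆ M v = 0` forces `M v = 0` for positive semidefinite `M`.
-/

open scoped MatrixOrder

namespace Matrix

theorem tendsto_nhds_iff {α m n R : Type*} [TopologicalSpace R] {f : α → Matrix m n R}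
    {l : Filter α} {A : Matrix m n R} :
    Tendsto f l (𝓝 A) ↔ ∀ i j, Tendsto (fun x => f x i j) l (𝓝 (A i j)) :=
  tendsto_pi_nhds.trans (forall_congr' fun _ => tendsto_pi_nhds)

variable {ι 𝕜 : Type*} [Fintype ι] [RCLike 𝕜]

theorem isClosed_setOf_posSemidef : IsClosed {A : Matrix ι ι 𝕜 | A.PosSemidef} := by
  simp only [posSemidef_iff_dotProduct_mulVec, ofPred_and, ofPred_forall]
  refine .inter (isClosed_eq continuous_id.matrix_conjTranspose continuous_id) ?_
  exact isClosed_iInter fun x => isClosed_le continuous_const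
    (continuous_const.dotProduct (continuous_id.matrix_mulVec continuous_const))

instance orderClosedTopology : OrderClosedTopology (Matrix ι ι 𝕜) where
  isClosed_le' := isClosed_setOf_posSemidef.preimage (continuous_snd.sub continuous_fst)

theorem mulVec_eq_zero_of_nonneg_of_le {M N : Matrix ι ι 𝕜} (hM : 0 ≤ M) (hMN : M ≤ N)
    {v : ι → 𝕜} (hv : N *ᵥ v = 0) : M *ᵥ v = 0 := by
  have hle : star v ⬝ᵥ M *ᵥ v ≤ 0 := by
    simpa [sub_mulVec, hv] using (le_iff.mp hMN).dotProduct_mulVec_nonneg v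
  have hnonneg : 0 ≤ star v ⬝ᵥ M *ᵥ v := hM.posSemidef.dotProduct_mulVec_nonneg v
  exact (hM.posSemidef.dotProduct_mulVec_zero_iff v).mp (le_antisymm hle hnonneg)

end Matrix

theorem AntitoneOn.mem_Icc_of_tendsto {β α : Type*} [Preorder β] [Preorder α]
    [TopologicalSpace α] [OrderClosedTopology α] {f : β → α} {a b : β} {l : α}
    {F : Filter β} [F.NeBot] (hf : AntitoneOn f (Icc a b)) (hF : ∀ᶠ x in F, x ∈ Icc a b)
    (hl : Tendsto f F (𝓝 l)) : l ∈ Icc (f b) (f a) :=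
  isClosed_Icc.mem_of_tendsto hl <| hF.mono fun _ hx =>
    ⟨hf hx (right_mem_Icc.2 (hx.1.trans hx.2)) hx.2,
      hf (left_mem_Icc.2 (hx.1.trans hx.2)) hx hx.1⟩

namespace Paper

theorem statement12_general {n : ℕ} (I : Set ℝ) (hIconn : I.OrdConnected)
    (Q : ℝ → Matrix (Fin n) (Fin n) ℂ) (hQpsd : ∀ t ∈ I, (Q t).PosSemidef)
    (hdec : ∀ t0 t1 : ℝ, t0 ∈ I → t1 ∈ I → t0 ≤ t1 → LoewnerLE (Q t1) (Q t0))
    (tm t0 t1 : ℝ) (htm : tm ∈ I) (ht0 : t0 ∈ I) (ht1 : t1 ∈ I)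
    (hlt1 : tm < t0) (hlt2 : t0 < t1)
    (L R : Matrix (Fin n) (Fin n) ℂ)
    (hL : ∀ i j, Tendsto (fun s => Q s i j) (𝓝[<] t0) (𝓝 (L i j)))
    (hR : ∀ i j, Tendsto (fun s => Q s i j) (𝓝[>] t0) (𝓝 (R i j))) :
    (∀ v : Fin n → ℂ, Q tm *ᵥ v = 0 → L *ᵥ v = 0) ∧
    (∀ v : Fin n → ℂ, L *ᵥ v = 0 → Q t0 *ᵥ v = 0) ∧
    (∀ v : Fin n → ℂ, Q t0 *ᵥ v = 0 → R *ᵥ v = 0) ∧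
    (∀ v : Fin n → ℂ, R *ᵥ v = 0 → Q t1 *ᵥ v = 0) := by
  have hanti : AntitoneOn Q I := fun a ha b hb hab => hdec a b ha hb hab
  obtain ⟨hQL, hLQ⟩ := (hanti.mono (hIconn.out htm ht0)).mem_Icc_of_tendsto
    (mem_of_superset (Ioo_mem_nhdsLT hlt1) Ioo_subset_Icc_self) (Matrix.tendsto_nhds_iff.2 hL)
  obtain ⟨hQR, hRQ⟩ := (hanti.mono (hIconn.out ht0 ht1)).mem_Icc_of_tendsto
    (mem_of_superset (Ioo_mem_nhdsGT hlt2) Ioo_subset_Icc_self) (Matrix.tendsto_nhds_iff.2 hR)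
  have hQ0 : 0 ≤ Q t0 := (hQpsd t0 ht0).nonneg
  have hQ1 : 0 ≤ Q t1 := (hQpsd t1 ht1).nonneg
  exact ⟨fun _ => Matrix.mulVec_eq_zero_of_nonneg_of_le (hQ0.trans hQL) hLQ,
    fun _ => Matrix.mulVec_eq_zero_of_nonneg_of_le hQ0 hQL,
    fun _ => Matrix.mulVec_eq_zero_of_nonneg_of_le (hQ1.trans hQR) hRQ,
    fun _ => Matrix.mulVec_eq_zero_of_nonneg_of_le hQ1 hQR⟩

/-- kernel inclusion chain for a weakly decreasing pointwise Hermitian PSD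
matrix function and its one-sided limits. -/
theorem statement12 {n : ℕ} (I : Set ℝ) (hIopen : IsOpen I) (hIconn : I.OrdConnected)
    (Q : ℝ → Matrix (Fin n) (Fin n) ℂ) (hQpsd : ∀ t ∈ I, (Q t).PosSemidef)
    (hdec : ∀ t0 t1 : ℝ, t0 ∈ I → t1 ∈ I → t0 ≤ t1 → LoewnerLE (Q t1) (Q t0))
    (tm t0 t1 : ℝ) (htm : tm ∈ I) (ht0 : t0 ∈ I) (ht1 : t1 ∈ I)
    (hlt1 : tm < t0) (hlt2 : t0 < t1)
    (L R : Matrix (Fin n) (Fin n) ℂ)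
    (hL : ∀ i j, Tendsto (fun s => Q s i j) (𝓝[<] t0) (𝓝 (L i j)))
    (hR : ∀ i j, Tendsto (fun s => Q s i j) (𝓝[>] t0) (𝓝 (R i j))) :
    (∀ v : Fin n → ℂ, Q tm *ᵥ v = 0 → L *ᵥ v = 0) ∧
    (∀ v : Fin n → ℂ, L *ᵥ v = 0 → Q t0 *ᵥ v = 0) ∧
    (∀ v : Fin n → ℂ, Q t0 *ᵥ v = 0 → R *ᵥ v = 0) ∧
    (∀ v : Fin n → ℂ, R *ᵥ v = 0 → Q t1 *ᵥ v = 0) :=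
  statement12_general I hIconn Q hQpsd hdec tm t0 t1 htm ht0 ht1 hlt1 hlt2 L R hL hR

end Paper
end
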